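/- Let n > k ≥ 1. If there exists a k-prolific permutation of size n, then n ≥ ⌈k²/2 + 2k + 1⌉; explicitly, 2n ≥ k² + 4k + 3 when k is odd, and 2n ≥ k² + 4k + 2 when k is even. -/

import Mathlib

/-!
If two entries of `σ` are at taxicab distance at most `k + 1`, the box they span contains at
most `k - 1` further entries; deleting these together with either corner leaves the same
pattern. So in a `k`-prolific permutation all pairwise taxicab distances are at least
`b = k + 2`.

For a permutation `v` of `[0, n)` with this property write `b = T + U + 1`, `U ∈ {T, T + 1}`.
Around a column `r`, the entry in column `r + t`, `|t| ≤ T`, blocks the `b - 2|t|` values from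
`v (r + t) - (T - |t|)` to `v (r + t) + (U - |t|)`. These blocks are pairwise disjoint, so
`n ≥ (2T + 1) b - 2T(T + 1)` up to the parts of the blocks that spill out of `[0, n)`. A spill
of more than `T - x` below `0` at column `r` forces an entry `j` with `v j + |r - j| < x`, and
such entries serve at most `x²` columns; likewise at the top. So if `n` were too small, one of
the `n - 2T` middle columns would spill little, and its blocks would not fit: `b² ≤ 2n + 2`.
-/
open Finset

namespace Prolific

/-- The L¹ ("taxicab") distance between the `i`th and `j`th entries of `σ`. -/
def dperm {n : ℕ} (σ : Equiv.Perm (Fin n)) (i j : Fin n) : ℕ :=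
  Nat.dist (i : ℕ) (j : ℕ) + Nat.dist (σ i : ℕ) (σ j : ℕ)

/-- The breadth of a permutation: the minimum distance between two distinct entries. -/
noncomputable def breadth {n : ℕ} (σ : Equiv.Perm (Fin n)) : ℕ :=
  sInf {d : ℕ | ∃ i j : Fin n, i ≠ j ∧ d = dperm σ i j}

/-- The pattern `σ_⟨A⟩` of `σ` obtained by deleting the entries in positions `A`. -/
noncomputable def pattern {n m : ℕ} (σ : Equiv.Perm (Fin n)) (A : Finset (Fin n))
    (h : Aᶜ.card = m) : Equiv.Perm (Fin m) :=
  (Aᶜ.orderIsoOfFin h).toEquiv.trans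
    (((Equiv.subtypeEquiv (σ : Equiv.Perm (Fin n)) (fun a => by
        constructor
        · exact fun ha => Finset.mem_image_of_mem σ ha
        · intro ha
          rcases Finset.mem_image.mp ha with ⟨x, hx, hxa⟩
          rwa [← σ.injective hxa])).trans
      ((Aᶜ.image σ).orderIsoOfFin
        (by rw [Finset.card_image_of_injective _ σ.injective, h])).toEquiv.symm))

/-- `σ_⟨A⟩ = σ_⟨B⟩` (in particular the two patterns have the same size). -/
def PatternEq {n : ℕ} (σ : Equiv.Perm (Fin n)) (A B : Finset (Fin n)) : Prop :=
  ∃ (m : ℕ) (hA : Aᶜ.card = m) (hB : Bᶜ.card = m), pattern σ A hA = pattern σ B hB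

/-- `σ` is `k`-prolific: distinct `k`-element sets of positions produce distinct patterns. -/
def IsProlific {n : ℕ} (k : ℕ) (σ : Equiv.Perm (Fin n)) : Prop :=
  ∀ A B : Finset (Fin n), A.card = k → B.card = k → A ≠ B → ¬ PatternEq σ A B

lemma pattern_lt_pattern_iff {n m : ℕ} (σ : Equiv.Perm (Fin n)) (A : Finset (Fin n))
    (h : Aᶜ.card = m) (s t : Fin m) :
    pattern σ A h s < pattern σ A h t ↔ σ (Aᶜ.orderEmbOfFin h s) < σ (Aᶜ.orderEmbOfFin h t) := by
  simp [pattern]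

lemma perm_eq_of_lt_iff_lt {m : ℕ} {π π' : Equiv.Perm (Fin m)}
    (h : ∀ s t, π s < π t ↔ π' s < π' t) : π = π' := by
  have hmono : StrictMono (π' ∘ π.symm) := fun a b hab => (h _ _).1 (by simpa using hab)
  refine Equiv.ext fun s => ?_
  simpa using (congrFun hmono.eq_id (π s)).symm

lemma pattern_eq_of_strictMonoOn {n m : ℕ} (σ : Equiv.Perm (Fin n)) {A B : Finset (Fin n)}
    (hA : Aᶜ.card = m) (hB : Bᶜ.card = m) {φ : Fin n → Fin n} (hmaps : ∀ x ∈ Aᶜ, φ x ∈ Bᶜ)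
    (hpos : StrictMonoOn φ (Aᶜ : Finset (Fin n)))
    (hval : ∀ x ∈ Aᶜ, ∀ y ∈ Aᶜ, σ (φ x) < σ (φ y) ↔ σ x < σ y) :
    pattern σ A hA = pattern σ B hB := by
  have hφ : φ ∘ Aᶜ.orderEmbOfFin hA = Bᶜ.orderEmbOfFin hB :=
    orderEmbOfFin_unique hB (fun s => hmaps _ (orderEmbOfFin_mem _ _ s))
      (fun s t hst => hpos (orderEmbOfFin_mem _ _ s) (orderEmbOfFin_mem _ _ t)
        ((orderEmbOfFin _ hA).strictMono hst))
  refine perm_eq_of_lt_iff_lt fun s t => ?_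
  rw [pattern_lt_pattern_iff, pattern_lt_pattern_iff, ← hφ, Function.comp_apply,
    Function.comp_apply, hval _ (orderEmbOfFin_mem _ _ s) _ (orderEmbOfFin_mem _ _ t)]

lemma apply_swap_lt_apply_swap_iff {α β : Type*} [DecidableEq α] [LinearOrder β] {f : α → β}
    (hf : Function.Injective f) {i j x y : α} (hx : x ≠ i) (hy : y ≠ i)
    (hxb : x ≠ j → (f x < f i ↔ f x < f j)) (hyb : y ≠ j → (f y < f i ↔ f y < f j)) :
    f (Equiv.swap i j x) < f (Equiv.swap i j y) ↔ f x < f y := by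
  rcases eq_or_ne x j with hxj | hxj <;> rcases eq_or_ne y j with hyj | hyj
  · simp only [hxj, hyj, lt_self_iff_false]
  · rw [hxj, Equiv.swap_apply_right, Equiv.swap_apply_of_ne_of_ne hy hyj]
    have := hf.ne hy
    have := hf.ne hyj
    have := hyb hyj
    grind
  · rw [hyj, Equiv.swap_apply_right, Equiv.swap_apply_of_ne_of_ne hx hxj]
    exact hxb hxj
  · rw [Equiv.swap_apply_of_ne_of_ne hx hxj, Equiv.swap_apply_of_ne_of_ne hy hyj]

lemma patternEq_insert_insert {n : ℕ} (σ : Equiv.Perm (Fin n)) {A : Finset (Fin n)}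
    {i j : Fin n} (hi : i ∉ A) (hj : j ∉ A)
    (hbox : ∀ x ∉ A, x ≠ i → x ≠ j → (x < i ↔ x < j) ∧ (σ x < σ i ↔ σ x < σ j)) :
    PatternEq σ (insert i A) (insert j A) := by
  have hcard : ∀ l ∉ A, (insert l A)ᶜ.card = n - (A.card + 1) := fun l hl => by
    rw [card_compl, card_insert_of_notMem hl, Fintype.card_fin]
  refine ⟨_, hcard i hi, hcard j hj, pattern_eq_of_strictMonoOn σ _ _ (φ := Equiv.swap i j)
    ?_ ?_ ?_⟩
  · intro x hx
    simp only [mem_compl, mem_insert, not_or] at hx ⊢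
    rcases eq_or_ne x j with rfl | hxj
    · simp [Equiv.swap_apply_right, hi, Ne.symm hx.1]
    · rw [Equiv.swap_apply_of_ne_of_ne hx.1 hxj]
      exact ⟨hxj, hx.2⟩
  · intro x hx y hy hxy
    simp only [coe_compl, Set.mem_compl_iff, mem_coe, mem_insert, not_or] at hx hy
    exact (apply_swap_lt_apply_swap_iff (f := id) Function.injective_id hx.1 hy.1
      (fun h => (hbox x hx.2 hx.1 h).1) (fun h => (hbox y hy.2 hy.1 h).1)).2 hxy
  · intro x hx y hy
    simp only [mem_compl, mem_insert, not_or] at hx hy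
    exact apply_swap_lt_apply_swap_iff σ.injective hx.1 hy.1
      (fun h => (hbox x hx.2 hx.1 h).2) (fun h => (hbox y hy.2 hy.1 h).2)

lemma card_Ioo_min_max_add_one {n : ℕ} {a b : Fin n} (hab : a ≠ b) :
    (Ioo (min a b) (max a b)).card + 1 = Nat.dist a b := by
  have : (a : ℕ) ≠ b := Fin.val_ne_of_ne hab
  rw [Fin.card_Ioo]
  simp only [Fin.coe_max, Fin.coe_min]
  unfold Nat.dist
  omega

lemma exists_box_subset_of_dperm_le {n k : ℕ} (σ : Equiv.Perm (Fin n)) (hk : 1 ≤ k) (hkn : k < n)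
    {i j : Fin n} (hij : i ≠ j) (hd : dperm σ i j ≤ k + 1) :
    ∃ A : Finset (Fin n), A.card = k - 1 ∧ i ∉ A ∧ j ∉ A ∧
      ∀ x ∉ A, x ≠ i → x ≠ j → (x < i ↔ x < j) ∧ (σ x < σ i ↔ σ x < σ j) := by
  set S := Ioo (min i j) (max i j) ∪
    (Ioo (min (σ i) (σ j)) (max (σ i) (σ j))).map σ.symm.toEmbedding with hSdef
  have hS : S.card ≤ k - 1 := by
    have := card_Ioo_min_max_add_one hij
    have := card_Ioo_min_max_add_one (σ.injective.ne hij)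
    have := card_union_le (Ioo (min i j) (max i j))
      ((Ioo (min (σ i) (σ j)) (max (σ i) (σ j))).map σ.symm.toEmbedding)
    rw [card_map, ← hSdef] at this
    unfold dperm at hd
    omega
  have hSij : S ⊆ {i, j}ᶜ := by
    intro x hx
    simp only [S, mem_union, mem_Ioo, mem_map_equiv, Equiv.symm_symm] at hx
    simp only [mem_compl, mem_insert, mem_singleton, not_or]
    constructor <;> rintro rfl <;> grind
  obtain ⟨A, hSA, hAij, hA⟩ := exists_subsuperset_card_eq hSij hS (by
    rw [card_compl, Fintype.card_fin, card_pair hij]; omega)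
  refine ⟨A, hA, fun h => by simpa using hAij h, fun h => by simpa using hAij h, ?_⟩
  intro x hx hxi hxj
  have hxS : x ∉ S := fun h => hx (hSA h)
  simp only [S, mem_union, mem_Ioo, mem_map_equiv, Equiv.symm_symm, not_or] at hxS
  have := σ.injective.ne hxi
  have := σ.injective.ne hxj
  constructor <;> grind

theorem IsProlific.add_two_le_dperm {n k : ℕ} {σ : Equiv.Perm (Fin n)} (hσ : IsProlific k σ)
    (hk : 1 ≤ k) (hkn : k < n) {i j : Fin n} (hij : i ≠ j) : k + 2 ≤ dperm σ i j := by
  by_contra! hd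
  obtain ⟨A, hA, hi, hj, hbox⟩ := exists_box_subset_of_dperm_le σ hk hkn hij (by omega)
  have hcard : ∀ l ∉ A, (insert l A).card = k := fun l hl => by
    rw [card_insert_of_notMem hl]; omega
  have hne : insert i A ≠ insert j A := fun h => by
    have := h ▸ mem_insert_self i A
    simp [hij, hi] at this
  exact hσ _ _ (hcard i hi) (hcard j hj) hne (patternEq_insert_insert σ hi hj hbox)

lemma sum_abs_Icc_neg {T : ℤ} (hT : 0 ≤ T) : ∑ t ∈ Icc (-T) T, |t| = T * (T + 1) := by
  induction T, hT using Int.leInduction with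
  | base => simp
  | succ T hT ih =>
    have hIcc : Icc (-(T + 1)) (T + 1) = insert (-(T + 1)) (insert (T + 1) (Icc (-T) T)) := by
      ext x; simp only [mem_Icc, mem_insert]; omega
    rw [hIcc, sum_insert (by simp only [mem_insert, mem_Icc]; omega),
      sum_insert (by simp only [mem_Icc]; omega), ih, abs_neg,
      abs_of_nonneg (by omega)]
    ring

lemma card_le_sq_of_forall_exists_add_abs_lt {g : ℤ → ℤ} {D : Set ℤ} (hg : Set.InjOn g D)
    (hg0 : ∀ j ∈ D, 0 ≤ g j) {s : Finset ℤ} {x : ℤ}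
    (hs : ∀ r ∈ s, ∃ j ∈ D, g j + |r - j| < x) : (s.card : ℤ) ≤ x ^ 2 := by
  choose! j hjD hj using hs
  -- `r` is recovered from `(g j + (r - j)⁺, g j + (j - r)⁺)`: the smaller coordinate is `g j`.
  have hinj : Set.InjOn (fun r => (g (j r) + max (r - j r) 0, g (j r) + max (j r - r) 0)) s := by
    intro r hr r' hr' hrr'
    simp only [Prod.mk.injEq] at hrr'
    have hg' : g (j r) = g (j r') := by omega
    have := hg (hjD r hr) (hjD r' hr') hg'
    omega
  have hmaps : ∀ r ∈ s, (g (j r) + max (r - j r) 0, g (j r) + max (j r - r) 0) ∈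
      Ico 0 x ×ˢ Ico 0 x := by
    intro r hr
    have := hg0 _ (hjD r hr)
    have := hj r hr
    simp only [mem_product, mem_Ico]
    rw [abs_eq_max_neg] at this
    omega
  have hcard := card_le_card_of_injOn _ hmaps hinj
  rw [card_product, Int.card_Ico, sub_zero] at hcard
  calc (s.card : ℤ) ≤ ((x.toNat * x.toNat : ℕ) : ℤ) := by exact_mod_cast hcard
    _ = max x 0 ^ 2 := by push_cast; rw [Int.toNat_eq_max]; ring
    _ ≤ x ^ 2 := by rcases le_total 0 x with hx | hx <;> simp [hx, sq_nonneg]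

/-- Integer model of a permutation of `[0, n)` with breadth at least `b`. -/
structure IsSpread (n b : ℤ) (v : ℤ → ℤ) : Prop where
  mapsTo : Set.MapsTo v (Set.Ico 0 n) (Set.Ico 0 n)
  injOn : Set.InjOn v (Set.Ico 0 n)
  le_dist : ∀ x ∈ Set.Ico 0 n, ∀ y ∈ Set.Ico 0 n, x ≠ y → b ≤ |x - y| + |v x - v y|

def complement (n : ℤ) (v : ℤ → ℤ) (x : ℤ) : ℤ := n - 1 - v x

-- How far the blocks `v (r + t) - (R - |t|), …` of the columns `r + t`, `|t| ≤ T`, reach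
-- below `0`.
noncomputable def spill (v : ℤ → ℤ) (T R r : ℤ) : ℤ :=
  ∑ t ∈ Icc (-T) T, max 0 (R - |t| - v (r + t))

section

variable {n b : ℤ} {v : ℤ → ℤ}

lemma isSpread_complement (h : IsSpread n b v) : IsSpread n b (complement n v) where
  mapsTo x hx := by
    have := h.mapsTo hx
    simp only [Set.mem_Ico, complement] at this ⊢
    omega
  injOn x hx y hy hxy := h.injOn hx hy (by simp only [complement] at hxy; omega)
  le_dist x hx y hy hxy := by
    rw [complement, complement, show n - 1 - v x - (n - 1 - v y) = -(v x - v y) by ring,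
      abs_neg]
    exact h.le_dist x hx y hy hxy

namespace IsSpread

lemma le_card (h : IsSpread n b v) (hn : 2 ≤ n) : b ≤ n := by
  have h0 : (0 : ℤ) ∈ Set.Ico 0 n := by simp only [Set.mem_Ico]; omega
  have h1 : (1 : ℤ) ∈ Set.Ico 0 n := by simp only [Set.mem_Ico]; omega
  have hdist := h.le_dist 0 h0 1 h1 zero_ne_one
  have hv0 := h.mapsTo h0
  have hv1 := h.mapsTo h1
  simp only [Set.mem_Ico, abs_eq_max_neg] at hv0 hv1 hdist
  omega

lemma eq_of_add_abs_lt (h : IsSpread n b v) {R r j j' : ℤ} (hR : 2 * R ≤ b + 1)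
    (hj : j ∈ Set.Ico 0 n) (hj' : j' ∈ Set.Ico 0 n) (hlt : v j + |r - j| < R)
    (hlt' : v j' + |r - j'| < R) : j = j' := by
  by_contra hne
  have hdist := h.le_dist j hj j' hj' hne
  have hv := h.mapsTo hj
  have hv' := h.mapsTo hj'
  simp only [Set.mem_Ico, abs_eq_max_neg] at hv hv' hdist hlt hlt'
  omega

lemma exists_add_abs_lt_of_lt_spill (h : IsSpread n b v) {T R r c : ℤ} (hR : 2 * R ≤ b + 1)
    (hr : T ≤ r) (hr' : r + T < n) (hc : 0 ≤ c) (hlt : c < spill v T R r) :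
    ∃ j ∈ Set.Ico 0 n, v j + |r - j| < R - c := by
  have hmem : ∀ t ∈ Icc (-T) T, r + t ∈ Set.Ico 0 n := fun t ht => by
    simp only [mem_Icc] at ht; simp only [Set.mem_Ico]; omega
  have habs : ∀ t, |r - (r + t)| = |t| := fun t => by rw [sub_add_cancel_left, abs_neg]
  obtain ⟨t₀, ht₀, hpos⟩ : ∃ t ∈ Icc (-T) T, 0 < R - |t| - v (r + t) := by
    by_contra! hno
    have : spill v T R r ≤ 0 := sum_nonpos fun t ht => max_le le_rfl (hno t ht)
    omega
  have hsingle : spill v T R r = max 0 (R - |t₀| - v (r + t₀)) := by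
    refine sum_eq_single_of_mem t₀ ht₀ fun t ht hne => max_eq_left ?_
    by_contra! hpos'
    refine hne (add_left_cancel (h.eq_of_add_abs_lt (r := r) hR (hmem t ht) (hmem t₀ ht₀) ?_ ?_))
      <;> rw [habs] <;> omega
  refine ⟨r + t₀, hmem t₀ ht₀, ?_⟩
  rw [habs]
  omega

lemma sum_blocks_le_add_spill (h : IsSpread n b v) {T U r : ℤ} (hT : 0 ≤ T) (hb : T + U + 1 = b)
    (hr : T ≤ r) (hr' : r + T < n) :
    (2 * T + 1) * b - 2 * T * (T + 1) ≤
      n + spill v T T r + spill (complement n v) T U r := by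
  have hmem : ∀ t ∈ Icc (-T) T, r + t ∈ Set.Ico 0 n := fun t ht => by
    simp only [mem_Icc] at ht; simp only [Set.mem_Ico]; omega
  -- The breadth condition makes the blocks, clipped to `[0, n)`, pairwise disjoint.
  set J : ℤ → Finset ℤ := fun t =>
    Icc (max 0 (v (r + t) - (T - |t|))) (min (n - 1) (v (r + t) + (U - |t|)))
  have hdisj : (Icc (-T) T : Set ℤ).PairwiseDisjoint J := by
    intro t ht t' ht' hne
    rw [Function.onFun, disjoint_left]
    intro z hz hz'
    have := h.le_dist _ (hmem t ht) _ (hmem t' ht') (by omega)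
    simp only [J, mem_Icc, le_min_iff, max_le_iff] at hz hz'
    simp only [abs_eq_max_neg] at this hz hz'
    omega
  have hsub : (Icc (-T) T).biUnion J ⊆ Icc 0 (n - 1) := by
    intro z hz
    simp only [J, mem_biUnion, mem_Icc, le_min_iff, max_le_iff] at hz ⊢
    omega
  have hJ : ∀ t ∈ Icc (-T) T, b - 2 * |t| - max 0 (T - |t| - v (r + t))
      - max 0 (U - |t| - complement n v (r + t)) ≤ (J t).card := by
    intro t ht
    simp only [J, Int.card_Icc, complement]
    omega
  have hn : ((Icc 0 (n - 1)).card : ℤ) = n := by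
    rw [Int.card_Icc]; omega
  calc (2 * T + 1) * b - 2 * T * (T + 1)
      = ∑ t ∈ Icc (-T) T, (b - 2 * |t|) := by
        rw [sum_sub_distrib, ← mul_sum, sum_abs_Icc_neg hT, sum_const, Int.card_Icc, nsmul_eq_mul]
        rw [Int.toNat_of_nonneg (by omega)]
        ring
    _ ≤ ∑ t ∈ Icc (-T) T, ((J t).card : ℤ) + spill v T T r + spill (complement n v) T U r := by
        simp only [spill, ← sum_add_distrib]
        exact sum_le_sum fun t ht => by linarith [hJ t ht]
    _ ≤ n + spill v T T r + spill (complement n v) T U r := by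
        rw [← Nat.cast_sum, ← card_biUnion hdisj, ← hn]
        gcongr

lemma card_filter_lt_spill_le (h : IsSpread n b v) {T R x : ℤ} (hR : 2 * R ≤ b + 1)
    (hx : x ≤ R) :
    (((Icc T (n - 1 - T)).filter fun r => R - x < spill v T R r).card : ℤ) ≤ x ^ 2 := by
  refine card_le_sq_of_forall_exists_add_abs_lt h.injOn (fun j hj => (h.mapsTo hj).1)
    fun r hr => ?_
  simp only [mem_filter, mem_Icc] at hr
  obtain ⟨j, hj, hlt⟩ := h.exists_add_abs_lt_of_lt_spill hR hr.1.1 (by omega) (by omega) hr.2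
  exact ⟨j, hj, by omega⟩

lemma exists_spill_le (h : IsSpread n b v) {T U x y : ℤ} (hT : 2 * T ≤ b + 1)
    (hU : 2 * U ≤ b + 1) (hx : x ≤ T) (hy : y ≤ U) (hxy : x ^ 2 + y ^ 2 < n - 2 * T) :
    ∃ r, T ≤ r ∧ r + T < n ∧ spill v T T r ≤ T - x ∧
      spill (complement n v) T U r ≤ U - y := by
  have hlow := h.card_filter_lt_spill_le (T := T) hT hx
  have hhigh := (isSpread_complement h).card_filter_lt_spill_le (T := T) hU hy
  have hcols : ((Icc T (n - 1 - T)).card : ℤ) = n - 2 * T := by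
    rw [Int.card_Icc]; omega
  obtain ⟨r, hr, hbad⟩ := exists_mem_notMem_of_card_lt_card (t := Icc T (n - 1 - T))
    (s := ((Icc T (n - 1 - T)).filter fun r => T - x < spill v T T r) ∪
      ((Icc T (n - 1 - T)).filter fun r => U - y < spill (complement n v) T U r)) (by
    have := card_union_le ((Icc T (n - 1 - T)).filter fun r => T - x < spill v T T r)
      ((Icc T (n - 1 - T)).filter fun r => U - y < spill (complement n v) T U r)
    have := sq_nonneg x
    have := sq_nonneg y
    omega)
  simp only [mem_union, mem_filter, not_or, not_and, not_lt] at hbad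
  rw [mem_Icc] at hr
  exact ⟨r, hr.1, by omega, hbad.1 (mem_Icc.2 hr), hbad.2 (mem_Icc.2 hr)⟩

lemma mul_sub_one_le_mul_sub_one {x T : ℤ} (hx : 0 ≤ x) (hxT : x ≤ T) :
    x * (x - 1) ≤ T * (T - 1) := by
  obtain rfl | hlt := hxT.eq_or_lt
  · exact le_rfl
  · nlinarith [mul_nonneg (sub_nonneg.2 hxT) (by omega : (0 : ℤ) ≤ T + x - 1)]

lemma sum_blocks_le_add_one (h : IsSpread n b v) (hn : 2 ≤ n) {T : ℤ} (hT : 1 ≤ T)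
    (hb : b = 2 * T + 1 ∧ 2 ≤ T ∨ b = 2 * T + 2) :
    (2 * T + 1) * b - 2 * T * (T + 1) ≤ n + 1 := by
  have hbn := h.le_card hn
  have hcol : ∀ x y, 0 ≤ x → x ≤ T → 0 ≤ y → y ≤ b - 1 - T → x ^ 2 + y ^ 2 < n - 2 * T →
      (2 * T + 1) * b - 2 * T * (T + 1) + x + y + 1 ≤ n + b := by
    intro x y hx hxT hy hyU hxy
    obtain ⟨r, hr, hr', hlow, hhigh⟩ := h.exists_spill_le (by omega) (by omega) hxT hyU hxy
    have := h.sum_blocks_le_add_spill (by omega) (show T + (b - 1 - T) + 1 = b by ring) hr hr'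
    omega
  -- Otherwise `hcol` applies to `x = min X T`, `y = X - x` and gives `X + 1 ≤ X`.
  by_contra! hlt
  have hX := hcol 0 0 le_rfl (by omega) le_rfl (by omega) (by norm_num; omega)
  set X := n + b - ((2 * T + 1) * b - 2 * T * (T + 1))
  have hx := mul_sub_one_le_mul_sub_one (x := min X T) (by omega) (min_le_right X T)
  have hy := mul_sub_one_le_mul_sub_one (x := X - min X T) (T := b - 2 - T) (by omega) (by omega)
  have := hcol (min X T) (X - min X T) (by omega) (min_le_right X T) (by omega) (by omega)
    (by rcases hb with ⟨rfl, _⟩ | rfl <;> nlinarith)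
  omega

lemma four_le (h : IsSpread n 3 v) (hn : 2 ≤ n) : 4 ≤ n := by
  have h3 := h.le_card hn
  by_contra! h4
  have hmem : ∀ x : ℤ, 0 ≤ x → x ≤ 2 → x ∈ Set.Ico 0 n := fun x h0 h2 => by
    simp only [Set.mem_Ico]; omega
  have m0 := hmem 0 le_rfl (by norm_num)
  have m1 := hmem 1 (by norm_num) (by norm_num)
  have m2 := hmem 2 (by norm_num) le_rfl
  have h01 := h.le_dist 0 m0 1 m1 (by norm_num)
  have h12 := h.le_dist 1 m1 2 m2 (by norm_num)
  have h02 := h.injOn.ne m0 m2 (by norm_num)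
  have hv0 := h.mapsTo m0
  have hv1 := h.mapsTo m1
  have hv2 := h.mapsTo m2
  simp only [Set.mem_Ico, abs_eq_max_neg] at h01 h12 hv0 hv1 hv2
  omega

theorem sq_le (h : IsSpread n b v) (hn : 2 ≤ n) (hb : 3 ≤ b) : b ^ 2 ≤ 2 * n + 2 := by
  obtain ⟨T, hT | hT⟩ : ∃ T, b = 2 * T + 1 ∨ b = 2 * T + 2 := ⟨(b - 1) / 2, by omega⟩
  · obtain rfl | hT2 : T = 1 ∨ 2 ≤ T := by omega
    · subst hT
      have := h.four_le hn
      omega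
    · have := h.sum_blocks_le_add_one hn (T := T) (by omega) (.inl ⟨hT, hT2⟩)
      subst hT
      nlinarith
  · have := h.sum_blocks_le_add_one hn (T := T) (by omega) (.inr hT)
    subst hT
    nlinarith

end IsSpread

end

lemma natCast_dperm {n : ℕ} (σ : Equiv.Perm (Fin n)) (i j : Fin n) :
    (dperm σ i j : ℤ) = |(i : ℤ) - j| + |(σ i : ℤ) - σ j| := by
  simp only [dperm, Nat.dist, abs_eq_max_neg]
  omega

def toIntFun {n : ℕ} (σ : Equiv.Perm (Fin n)) (x : ℤ) : ℤ :=
  if h : 0 ≤ x ∧ x < n then σ ⟨x.toNat, by omega⟩ else 0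

lemma toIntFun_natCast {n : ℕ} (σ : Equiv.Perm (Fin n)) (i : Fin n) :
    toIntFun σ i = σ i := by
  simp [toIntFun]

lemma exists_natCast_eq_of_mem_Ico {n : ℕ} {x : ℤ} (hx : x ∈ Set.Ico 0 (n : ℤ)) :
    ∃ i : Fin n, (i : ℤ) = x := by
  rw [Set.mem_Ico] at hx
  exact ⟨⟨x.toNat, by omega⟩, Int.toNat_of_nonneg hx.1⟩

lemma isSpread_toIntFun {n b : ℕ} {σ : Equiv.Perm (Fin n)}
    (hσ : ∀ i j, i ≠ j → b ≤ dperm σ i j) : IsSpread n b (toIntFun σ) where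
  mapsTo x hx := by
    obtain ⟨i, rfl⟩ := exists_natCast_eq_of_mem_Ico hx
    rw [toIntFun_natCast]
    simp
  injOn x hx y hy hxy := by
    obtain ⟨i, rfl⟩ := exists_natCast_eq_of_mem_Ico hx
    obtain ⟨j, rfl⟩ := exists_natCast_eq_of_mem_Ico hy
    rw [toIntFun_natCast, toIntFun_natCast] at hxy
    simp [σ.injective (Fin.ext (by exact_mod_cast hxy))]
  le_dist x hx y hy hxy := by
    obtain ⟨i, rfl⟩ := exists_natCast_eq_of_mem_Ico hx
    obtain ⟨j, rfl⟩ := exists_natCast_eq_of_mem_Ico hy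
    rw [toIntFun_natCast, toIntFun_natCast, ← natCast_dperm]
    exact_mod_cast hσ i j (fun h => hxy (h ▸ rfl))

/-- Lower bound on the size of a `k`-prolific permutation:
`n ≥ ⌈k²/2 + 2k + 1⌉`, i.e. `2n ≥ k² + 4k + 3` for odd `k` and
`2n ≥ k² + 4k + 2` for even `k`. -/
theorem minprol_lower_bound {n k : ℕ} (hk : 1 ≤ k) (hkn : k < n)
    (hex : ∃ σ : Equiv.Perm (Fin n), IsProlific k σ) :
    (k ^ 2 + 4 * k + 3) / 2 ≤ n ∧
    (Odd k → k ^ 2 + 4 * k + 3 ≤ 2 * n) ∧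
    (Even k → k ^ 2 + 4 * k + 2 ≤ 2 * n) := by
  obtain ⟨σ, hσ⟩ := hex
  have hspread : IsSpread n (k + 2 : ℕ) (toIntFun σ) :=
    isSpread_toIntFun fun i j hij => hσ.add_two_le_dperm hk hkn hij
  have hsq : k ^ 2 + 4 * k + 2 ≤ 2 * n := by
    have := hspread.sq_le (by omega) (by omega)
    push_cast at this
    nlinarith
  refine ⟨by omega, fun ⟨a, ha⟩ => ?_, fun _ => hsq⟩
  subst ha
  ring_nf at hsq ⊢
  omega

end Prolific
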